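/- arXiv:2310.06203 — 3 statements merged into one kernel-verified Lean document; each statement's English description precedes it below -/
import Mathlib

section
/- For a prime p, a connected circulant graph G(p;S) with symbol set S ⊆ {1,...,p-1}, S = -S mod p, is strongly regular if and only if p ≡ 1 (mod 4) and S is either the set of all nonzero quadratic residues modulo p or the set of all quadratic non-residues modulo p. -/
open Polynomial
open scoped Classical

/-- The circulant graph `G(n;S)`: vertices `ℤ_n`, `i ~ j` iff `i ≠ j` and `i - j ∈ S`
(for a symbol set with `S = -S` this agrees with `fromRel`). -/
def circGraph (n : ℕ) (S : Set (ZMod n)) : SimpleGraph (ZMod n) :=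
  SimpleGraph.fromRel (fun i j => i - j ∈ S)

/-- The adjacency matrix of a graph, over `ℂ`. -/
noncomputable def adjMat {V : Type*} [Fintype V] (G : SimpleGraph V) : Matrix V V ℂ :=
  Matrix.of fun i j => if G.Adj i j then 1 else 0

/-!
The adjacency matrix of `G(p;S)` is circulant, so its eigenvalues are the Fourier coefficients
`λ k` of the indicator of `S`, with `λ 0 = #S`. The symbol is rational, so the Galois automorphisms
`ζ ↦ ζ^t` of `ℚ(ζ_p)` give `λ k = λ k' → λ (t k) = λ (t k')`. With `∑_k λ k = p · [0 ∈ S] = 0`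
this shows that `λ 0` is not attained at any `k ≠ 0`, so the graph is strongly regular iff `λ`
takes exactly two values on the units. Then `λ (c²) = λ 1` for every unit `c` (if `λ c ≠ λ 1`, also
`λ c⁻¹ ≠ λ 1`, so `λ c = λ c⁻¹`), hence `λ` and, by Fourier inversion, `S` are stable under
multiplication by squares: `S` is a square class, and `S = -S` makes `-1` a square. Conversely, for
a square class `S` the function `λ` is constant on both classes, and the two values differ since
otherwise `S` would be stable under multiplication by every unit.
-/

theorem IsPrimitiveRoot.aeval_eq_zero_of_aeval_eq_zero {K : Type*} [Field K] [CharZero K]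
    {n : ℕ} (hn : 0 < n) {ζ η : K} (hζ : IsPrimitiveRoot ζ n) (hη : IsPrimitiveRoot η n)
    {f : ℚ[X]} (hf : aeval ζ f = 0) : aeval η f = 0 := by
  have hdvd : minpoly ℚ η ∣ f := by
    rw [← cyclotomic_eq_minpoly_rat hη hn, cyclotomic_eq_minpoly_rat hζ hn]
    exact minpoly.dvd ℚ ζ hf
  exact aeval_eq_zero_of_dvd_aeval_eq_zero hdvd (minpoly.aeval ℚ η)

namespace ZMod

open Matrix

variable {N : ℕ} [NeZero N]

lemma sum_dft {E : Type*} [AddCommGroup E] [Module ℂ E] (Φ : ZMod N → E) :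
    ∑ k, 𝓕 Φ k = (N : ℂ) • Φ 0 := by
  rw [← dft_apply_zero]
  simpa using congr_fun (dft_dft Φ) 0

lemma dft_comp_unitMul_eq_self_iff {E : Type*} [AddCommGroup E] [Module ℂ E]
    (Φ : ZMod N → E) (u : (ZMod N)ˣ) :
    (fun j ↦ Φ (u * j)) = Φ ↔ (fun k ↦ 𝓕 Φ (u * k)) = 𝓕 Φ := by
  rw [← dft.injective.eq_iff]
  constructor <;> intro h <;> funext k
  · simpa [dft_comp_unitMul] using (congr_fun h (u * k)).symm
  · simpa [dft_comp_unitMul] using (congr_fun h (u⁻¹ * k)).symm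

lemma stdAddChar_mul_eq_pow_val (t x : ZMod N) : stdAddChar (t * x) = stdAddChar t ^ x.val := by
  rw [← AddChar.map_nsmul_eq_pow, nsmul_eq_mul, natCast_zmod_val, mul_comm]

lemma dftMatrix_mul_conj :
    (of fun i j : ZMod N ↦ stdAddChar (i * j)) * (of fun i j ↦ stdAddChar (-(i * j))) =
      (N : ℂ) • (1 : Matrix (ZMod N) (ZMod N) ℂ) := by
  ext i k
  have h : ∀ l : ZMod N, stdAddChar (i * l) * stdAddChar (-(l * k)) = stdAddChar (l * (i - k)) := by
    intro l; rw [← AddChar.map_add_eq_mul]; ring_nf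
  simp only [mul_apply, of_apply, h, AddChar.sum_mulShift _ (isPrimitive_stdAddChar N),
    sub_eq_zero, card, Matrix.smul_apply, Matrix.one_apply]
  split_ifs <;> simp

theorem spectrum_circulant (v : ZMod N → ℂ) : spectrum ℂ (circulant v) = Set.range (𝓕 v) := by
  set F : Matrix (ZMod N) (ZMod N) ℂ := of fun i j ↦ stdAddChar (i * j)
  have hF : IsUnit F := by
    rw [isUnit_iff_isUnit_det]
    refine isUnit_det_of_right_inverse (B := (N : ℂ)⁻¹ • of fun i j ↦ stdAddChar (-(i * j))) ?_
    rw [Matrix.mul_smul, dftMatrix_mul_conj, smul_smul, inv_mul_cancel₀ (NeZero.ne _), one_smul]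
  have hdiag : circulant v * F = F * diagonal (𝓕 v) := by
    ext i k
    rw [mul_diagonal, mul_apply, dft_apply, Finset.mul_sum]
    refine Fintype.sum_equiv (Equiv.subLeft i) _ _ fun l ↦ ?_
    simp only [circulant_apply, F, of_apply, Equiv.subLeft_apply, smul_eq_mul]
    rw [← mul_assoc, ← AddChar.map_add_eq_mul, mul_comm]
    ring_nf
  obtain ⟨u, hu⟩ := hF
  rw [← hu] at hdiag
  have hconj : diagonal (𝓕 v) = u⁻¹.val * circulant v * u.val := by
    rw [mul_assoc, hdiag, ← mul_assoc, Units.inv_mul, one_mul]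
  rw [← spectrum_diagonal, hconj, spectrum.units_conjugate']

lemma dft_ratCast_mul_eq_aeval (c : ZMod N → ℚ) (t k : ZMod N) :
    𝓕 (fun j ↦ (c j : ℂ)) (t * k) =
      aeval (stdAddChar t) (∑ j, C (c j) * X ^ (-(j * k)).val) := by
  simp only [dft_apply, map_sum, map_mul, aeval_C, map_pow, aeval_X,
    ← stdAddChar_mul_eq_pow_val, smul_eq_mul, eq_ratCast]
  refine Finset.sum_congr rfl fun j _ ↦ ?_
  rw [mul_comm]
  ring_nf

section Prime

variable {p : ℕ} [Fact p.Prime]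

lemma isPrimitiveRoot_stdAddChar {t : ZMod p} (ht : t ≠ 0) :
    IsPrimitiveRoot (stdAddChar t) p := by
  have hp : p.Prime := Fact.out
  refine isPrimitiveRoot_of_mem_nthRootsFinset hp ?_ ?_
  · rw [mem_nthRootsFinset hp.pos, ← AddChar.map_nsmul_eq_pow, nsmul_eq_mul, natCast_self,
      zero_mul, AddChar.map_zero_eq_one]
  · rw [← AddChar.map_zero_eq_one (stdAddChar (N := p))]
    exact injective_stdAddChar.ne ht

theorem dft_ratCast_mul_eq_of_eq (c : ZMod p → ℚ) {k k' : ZMod p}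
    (h : 𝓕 (fun j ↦ (c j : ℂ)) k = 𝓕 (fun j ↦ (c j : ℂ)) k') (t : ZMod p) :
    𝓕 (fun j ↦ (c j : ℂ)) (t * k) = 𝓕 (fun j ↦ (c j : ℂ)) (t * k') := by
  rcases eq_or_ne t 0 with rfl | ht
  · simp
  rw [← sub_eq_zero, dft_ratCast_mul_eq_aeval, dft_ratCast_mul_eq_aeval, ← map_sub]
  refine (isPrimitiveRoot_stdAddChar one_ne_zero).aeval_eq_zero_of_aeval_eq_zero
    (Fact.out : p.Prime).pos (isPrimitiveRoot_stdAddChar ht) ?_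
  rwa [map_sub, ← dft_ratCast_mul_eq_aeval, ← dft_ratCast_mul_eq_aeval, one_mul, one_mul,
    sub_eq_zero]

theorem dft_ratCast_apply_zero_eq_zero (c : ZMod p → ℚ) (hc : c 0 = 0) {k : ZMod p} (hk : k ≠ 0)
    (h : 𝓕 (fun j ↦ (c j : ℂ)) k = 𝓕 (fun j ↦ (c j : ℂ)) 0) : 𝓕 (fun j ↦ (c j : ℂ)) 0 = 0 := by
  have hconst : ∀ j, 𝓕 (fun j ↦ (c j : ℂ)) j = 𝓕 (fun j ↦ (c j : ℂ)) 0 := fun j ↦ by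
    simpa [hk] using dft_ratCast_mul_eq_of_eq c h (j / k)
  have hsum := sum_dft fun j ↦ (c j : ℂ)
  simp only [hconst, Finset.sum_const, Finset.card_univ, card, hc, Rat.cast_zero, smul_zero,
    smul_eq_zero] at hsum
  exact hsum.resolve_left (NeZero.ne p)

theorem mod_four_eq_one_of_isSquare_neg_one (hp2 : p ≠ 2) (h : IsSquare (-1 : ZMod p)) :
    p % 4 = 1 := by
  have := ZMod.exists_sq_eq_neg_one_iff.1 h
  have := (Fact.out : p.Prime).eq_two_or_odd
  omega

end Prime

end ZMod

namespace FiniteField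

variable {F : Type*} [Field F] [Fintype F]

theorem isSquare_div_iff {x y : F} (hx : x ≠ 0) (hy : y ≠ 0) :
    IsSquare (x / y) ↔ (IsSquare x ↔ IsSquare y) := by
  have hmul : quadraticChar F x = quadraticChar F (x / y) * quadraticChar F y := by
    rw [← map_mul, div_mul_cancel₀ x hy]
  rw [← quadraticChar_one_iff_isSquare (div_ne_zero hx hy), ← quadraticChar_one_iff_isSquare hx,
    ← quadraticChar_one_iff_isSquare hy, hmul]
  rcases quadraticChar_dichotomy (div_ne_zero hx hy) with h | h <;>
    rcases quadraticChar_dichotomy hy with h' | h' <;> simp [h, h']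

theorem isSquare_sq_mul_iff {c x : F} (hc : c ≠ 0) : IsSquare (c ^ 2 * x) ↔ IsSquare x := by
  rcases eq_or_ne x 0 with rfl | hx
  · simp
  rw [← isSquare_div_iff (mul_ne_zero (pow_ne_zero 2 hc) hx) hx, mul_div_cancel_right₀ _ hx]
  exact ⟨c, sq c⟩

theorem eq_empty_or_squares_or_nonsquares_or_nonzero {S : Set F} (h0 : 0 ∉ S)
    (hS : ∀ c ≠ 0, ∀ s ∈ S, c ^ 2 * s ∈ S) :
    S = ∅ ∨ S = {x | x ≠ 0 ∧ IsSquare x} ∨ S = {x | x ≠ 0 ∧ ¬IsSquare x} ∨ S = {x | x ≠ 0} := by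
  have hne : ∀ s ∈ S, s ≠ 0 := fun s hs h ↦ h0 (h ▸ hs)
  have hclass : ∀ s ∈ S, ∀ y ≠ 0, (IsSquare y ↔ IsSquare s) → y ∈ S := by
    intro s hs y hy hys
    obtain ⟨c, hc⟩ := (isSquare_div_iff hy (hne s hs)).2 hys
    have hc0 : c ≠ 0 := by rintro rfl; simp [hne s hs, hy] at hc
    convert hS c hc0 s hs
    rw [sq, ← hc, div_mul_cancel₀ y (hne s hs)]
  by_cases hsq : ∃ s ∈ S, IsSquare s <;> by_cases hns : ∃ s ∈ S, ¬IsSquare s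
  · obtain ⟨s, hs, hs'⟩ := hsq
    obtain ⟨s', hs₁, hs₁'⟩ := hns
    refine Or.inr (Or.inr (Or.inr (Set.ext fun y ↦ ⟨hne y, fun hy ↦ ?_⟩)))
    by_cases hy' : IsSquare y
    · exact hclass s hs y hy (by simp [hy', hs'])
    · exact hclass s' hs₁ y hy (by simp [hy', hs₁'])
  · obtain ⟨s, hs, hs'⟩ := hsq
    push Not at hns
    refine Or.inr (Or.inl (Set.ext fun y ↦ ⟨fun hy ↦ ⟨hne y hy, hns y hy⟩, fun hy ↦ ?_⟩))
    exact hclass s hs y hy.1 (by simp [hy.2, hs'])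
  · obtain ⟨s, hs, hs'⟩ := hns
    push Not at hsq
    refine Or.inr (Or.inr (Or.inl (Set.ext fun y ↦ ⟨fun hy ↦ ⟨hne y hy, hsq y hy⟩, fun hy ↦ ?_⟩)))
    exact hclass s hs y hy.1 (by simp [hy.2, hs'])
  · push Not at hsq hns
    exact Or.inl (Set.eq_empty_of_forall_notMem fun s hs ↦ hsq s hs (hns s hs))

end FiniteField

section CirculantGraph

open ZMod Matrix

variable {N : ℕ} [NeZero N] {S : Set (ZMod N)}

/-- The symbol of `S` is taken `ℚ`-valued so that the eigenvalues can be Galois-conjugated. -/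
noncomputable def circEigenvalue (S : Set (ZMod N)) : ZMod N → ℂ :=
  𝓕 fun j ↦ ((S.indicator 1 j : ℚ) : ℂ)

theorem adjMat_circGraph (h0 : (0 : ZMod N) ∉ S) (hsym : ∀ s ∈ S, -s ∈ S) :
    adjMat (circGraph N S) = circulant fun j ↦ ((S.indicator 1 j : ℚ) : ℂ) := by
  have hadj : ∀ i j, (circGraph N S).Adj i j ↔ i - j ∈ S := fun i j ↦ by
    simp only [circGraph, SimpleGraph.fromRel_adj]
    refine ⟨fun ⟨_, h⟩ ↦ h.elim id fun h ↦ by simpa using hsym _ h,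
      fun h ↦ ⟨fun hij ↦ h0 (by simpa [hij] using h), Or.inl h⟩⟩
  ext i j
  simp only [adjMat, circulant_apply, of_apply, Set.indicator_apply, hadj, Pi.one_apply]
  split_ifs <;> simp

theorem spectrum_adjMat_circGraph (h0 : (0 : ZMod N) ∉ S) (hsym : ∀ s ∈ S, -s ∈ S) :
    spectrum ℂ (adjMat (circGraph N S)) = Set.range (circEigenvalue S) := by
  rw [adjMat_circGraph h0 hsym, spectrum_circulant]
  rfl

end CirculantGraph

section PrimeOrder

open ZMod

variable {p : ℕ} [Fact p.Prime] {S : Set (ZMod p)}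

theorem circEigenvalue_mul_eq_of_eq {k k' : ZMod p} (h : circEigenvalue S k = circEigenvalue S k')
    (t : ZMod p) : circEigenvalue S (t * k) = circEigenvalue S (t * k') :=
  dft_ratCast_mul_eq_of_eq _ h t

theorem circEigenvalue_mul_eq_self_iff {t : ZMod p} (ht : t ≠ 0) :
    (∀ k, circEigenvalue S (t * k) = circEigenvalue S k) ↔ ∀ s, t * s ∈ S ↔ s ∈ S := by
  have h := dft_comp_unitMul_eq_self_iff (fun j ↦ ((S.indicator 1 j : ℚ) : ℂ)) (Units.mk0 t ht)
  simp only [funext_iff, Units.val_mk0] at h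
  rw [circEigenvalue, ← h]
  refine forall_congr' fun s ↦ ?_
  by_cases hts : t * s ∈ S <;> by_cases hs : s ∈ S <;> simp [hts, hs]

theorem circEigenvalue_zero_notMem (h0 : (0 : ZMod p) ∉ S) (hS : S.Nonempty) :
    circEigenvalue S 0 ∉ circEigenvalue S '' {0}ᶜ := by
  rintro ⟨k, hk, h⟩
  have hsum := dft_ratCast_apply_zero_eq_zero _ (by simp [h0]) hk h
  obtain ⟨s, hs⟩ := hS
  simp [dft_apply_zero, Set.indicator_apply, apply_ite, Finset.sum_boole,
    Finset.filter_eq_empty_iff] at hsum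
  exact hsum hs

theorem ncard_range_circEigenvalue_eq_three_iff (h0 : (0 : ZMod p) ∉ S) :
    (Set.range (circEigenvalue S)).ncard = 3 ↔ (circEigenvalue S '' {0}ᶜ).ncard = 2 := by
  rcases S.eq_empty_or_nonempty with rfl | hS
  · have he : circEigenvalue (∅ : Set (ZMod p)) = 0 := by
      simp only [circEigenvalue, Set.indicator_empty, Rat.cast_zero]
      exact map_zero _
    have hne : ({0}ᶜ : Set (ZMod p)).Nonempty := ⟨1, one_ne_zero⟩
    simp [he, Set.range_zero, hne.image_const]
  · rw [← Set.insert_image_compl_eq_range,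
      Set.ncard_insert_of_notMem (circEigenvalue_zero_notMem h0 hS)]
    omega

theorem subsingleton_circEigenvalue_image_iff :
    (circEigenvalue S '' {0}ᶜ).Subsingleton ↔ ∀ t ≠ 0, ∀ s, t * s ∈ S ↔ s ∈ S := by
  refine Iff.trans ?_ (forall₂_congr fun t ht ↦ circEigenvalue_mul_eq_self_iff ht)
  constructor
  · intro h t ht k
    rcases eq_or_ne k 0 with rfl | hk
    · simp
    exact h ⟨_, mul_ne_zero ht hk, rfl⟩ ⟨k, hk, rfl⟩
  · rintro h _ ⟨k, hk, rfl⟩ _ ⟨k', hk', rfl⟩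
    simpa [div_mul_cancel₀ _ hk] using (h (k' / k) (div_ne_zero hk' hk) k).symm

theorem circEigenvalue_sq_mul (hV : (circEigenvalue S '' {0}ᶜ).ncard ≤ 2) {c : ZMod p}
    (hc : c ≠ 0) (k : ZMod p) : circEigenvalue S (c ^ 2 * k) = circEigenvalue S k := by
  suffices h : circEigenvalue S (c ^ 2) = circEigenvalue S 1 by
    simpa [mul_comm] using circEigenvalue_mul_eq_of_eq h k
  by_cases h1 : circEigenvalue S c = circEigenvalue S 1
  · simpa [sq, h1] using circEigenvalue_mul_eq_of_eq h1 c
  -- otherwise `c` and `c⁻¹` both miss the value at `1`, so they share the only other value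
  have h2 : circEigenvalue S c⁻¹ ≠ circEigenvalue S 1 := fun h ↦
    h1 (by simpa [hc] using (circEigenvalue_mul_eq_of_eq h c).symm)
  have h3 : circEigenvalue S c = circEigenvalue S c⁻¹ := by
    by_contra h3
    refine hV.not_gt ((Set.two_lt_ncard_iff (Set.toFinite _)).2 ⟨_, _, _, ⟨c, hc, rfl⟩,
      ⟨c⁻¹, inv_ne_zero hc, rfl⟩, ⟨1, one_ne_zero, rfl⟩, h3, h1, h2⟩)
  simpa [sq, hc] using circEigenvalue_mul_eq_of_eq h3 c

theorem eq_squares_or_nonsquares_of_ncard_eq_two (h0 : (0 : ZMod p) ∉ S)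
    (hsym : ∀ s ∈ S, -s ∈ S) (hV : (circEigenvalue S '' {0}ᶜ).ncard = 2) :
    p % 4 = 1 ∧
      (S = {x : ZMod p | x ≠ 0 ∧ IsSquare x} ∨ S = {x : ZMod p | x ≠ 0 ∧ ¬ IsSquare x}) := by
  have hV' : ¬(circEigenvalue S '' {0}ᶜ).Subsingleton := fun h ↦ by
    have := Set.ncard_le_one_iff_subsingleton.2 h
    omega
  have hp2 : p ≠ 2 := by
    rintro rfl
    refine hV' (Set.Subsingleton.image (Set.subsingleton_of_subset_singleton (a := 1) ?_) _)
    intro x hx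
    fin_cases x
    · exact absurd rfl hx
    · rfl
  have hne : S.Nonempty :=
    Set.nonempty_iff_ne_empty.2 fun h ↦ hV' (subsingleton_circEigenvalue_image_iff.2 (by simp [h]))
  have hinv : ∀ c ≠ 0, ∀ s ∈ S, c ^ 2 * s ∈ S := fun c hc s ↦
    ((circEigenvalue_mul_eq_self_iff (pow_ne_zero 2 hc)).1 (circEigenvalue_sq_mul hV.le hc) s).2
  suffices hS : S = {x | x ≠ 0 ∧ IsSquare x} ∨ S = {x | x ≠ 0 ∧ ¬ IsSquare x} by
    obtain ⟨s, hs⟩ := hne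
    have hs0 : s ≠ 0 := fun h ↦ h0 (h ▸ hs)
    -- `-1 = -s / s` is a ratio within one square class
    have hclass : IsSquare (-s) ↔ IsSquare s := by
      have hs' := hsym s hs
      rcases hS with rfl | rfl <;> simp only [Set.mem_ofPred_eq] at hs hs' <;> tauto
    refine ⟨ZMod.mod_four_eq_one_of_isSquare_neg_one hp2 ?_, hS⟩
    simpa [neg_div, hs0] using (FiniteField.isSquare_div_iff (neg_ne_zero.2 hs0) hs0).2 hclass
  rcases FiniteField.eq_empty_or_squares_or_nonsquares_or_nonzero h0 hinv with h | h | h | h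
  · exact absurd h hne.ne_empty
  · exact Or.inl h
  · exact Or.inr h
  · exact absurd (subsingleton_circEigenvalue_image_iff.2 fun t ht s ↦ by simp [h, ht]) hV'

theorem ncard_eq_two_of_eq_squares_or_nonsquares (hp2 : p ≠ 2)
    (hS : S = {x : ZMod p | x ≠ 0 ∧ IsSquare x} ∨ S = {x : ZMod p | x ≠ 0 ∧ ¬ IsSquare x}) :
    (circEigenvalue S '' {0}ᶜ).ncard = 2 := by
  set e := circEigenvalue S
  obtain ⟨u, hu⟩ := FiniteField.exists_nonsquare (F := ZMod p) (by rwa [ZMod.ringChar_zmod_n])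
  have hu0 : u ≠ 0 := by rintro rfl; exact hu IsSquare.zero
  have hsq : ∀ c ≠ 0, ∀ k, e (c ^ 2 * k) = e k := fun c hc ↦
    (circEigenvalue_mul_eq_self_iff (pow_ne_zero 2 hc)).2 fun s ↦ by
      rcases hS with rfl | rfl <;> simp [FiniteField.isSquare_sq_mul_iff hc, hc]
  have hV : e '' {0}ᶜ = {e 1, e u} := by
    refine Set.Subset.antisymm ?_ (Set.insert_subset ⟨1, one_ne_zero, rfl⟩
      (Set.singleton_subset_iff.2 ⟨u, hu0, rfl⟩))
    rintro _ ⟨k, hk, rfl⟩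
    by_cases hk' : IsSquare k
    · obtain ⟨c, rfl⟩ := hk'
      left
      simpa [sq] using hsq c (by rintro rfl; simp at hk) 1
    · obtain ⟨c, hc⟩ := (FiniteField.isSquare_div_iff hk hu0).2 (by simp [hk', hu])
      have hc0 : c ≠ 0 := by rintro rfl; simp [hu0] at hc; exact hk hc
      right
      simpa [sq, ← hc, div_mul_cancel₀ _ hu0] using hsq c hc0 u
  have hne : e 1 ≠ e u := by
    intro h
    have := subsingleton_circEigenvalue_image_iff.1
      (by rw [hV, h, Set.pair_eq_singleton]; exact Set.subsingleton_singleton) u hu0 1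
    rcases hS with rfl | rfl <;> simp [hu, hu0] at this
  rw [hV, Set.ncard_pair hne]

end PrimeOrder

theorem stmt_2_general (p : ℕ) [NeZero p] (hp : p.Prime) (S : Set (ZMod p))
    (h0 : (0 : ZMod p) ∉ S) (hsym : ∀ s ∈ S, -s ∈ S) :
    (spectrum ℂ (adjMat (circGraph p S))).ncard = 3 ↔
      p % 4 = 1 ∧
        (S = {x : ZMod p | x ≠ 0 ∧ IsSquare x} ∨
          S = {x : ZMod p | x ≠ 0 ∧ ¬ IsSquare x}) := by
  have : Fact p.Prime := ⟨hp⟩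
  rw [spectrum_adjMat_circGraph h0 hsym, ncard_range_circEigenvalue_eq_three_iff h0]
  refine ⟨eq_squares_or_nonsquares_of_ncard_eq_two h0 hsym, fun ⟨hp4, hS⟩ ↦ ?_⟩
  exact ncard_eq_two_of_eq_squares_or_nonsquares (by omega) hS

/-- for a prime `p`, a connected circulant graph `G(p;S)` with
`S ⊆ {1,…,p-1}`, `S = -S`, is strongly regular (i.e. has exactly three distinct
adjacency eigenvalues) iff `p ≡ 1 (mod 4)` and `S` is the set of nonzero quadratic
residues or the set of quadratic non-residues modulo `p`. -/
theorem stmt_2 (p : ℕ) [NeZero p] (hp : p.Prime) (S : Set (ZMod p))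
    (h0 : (0 : ZMod p) ∉ S) (hsym : ∀ s ∈ S, -s ∈ S)
    (hconn : (circGraph p S).Connected) :
    (spectrum ℂ (adjMat (circGraph p S))).ncard = 3 ↔
      p % 4 = 1 ∧
        (S = {x : ZMod p | x ≠ 0 ∧ IsSquare x} ∨
          S = {x : ZMod p | x ≠ 0 ∧ ¬ IsSquare x}) :=
  stmt_2_general p hp S h0 hsym
end

section
/- The unitary Cayley graph X_n is strongly regular if and only if n is a composite prime power, i.e., n = p^α for some prime p and α ≥ 2. -/
/-!
The adjacency matrix of `X_n` is the circulant matrix of the indicator of the units of `ℤ_n`,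
so the additive characters of `ℤ_n` diagonalize it and its eigenvalues are the Ramanujan sums
`c_n(a) = ∑_{u ∈ ℤ_nˣ} ζ^{au}`. Writing `a = g·b` with `g = gcd(a, n)` and `b` a unit modulo
`d = n / g`, the sum over `ℤ_nˣ` pushes forward to `ℤ_dˣ` with fibres of size `φ(n)/φ(d)`, and
the sum of the primitive `d`-th roots of unity is `μ(d)` by Möbius inversion; this is von
Sterneck's formula `c_n(a) = μ(d) φ(n)/φ(d)`. For `n = p^α` the only values are `φ(n)`,
`-φ(n)/(p-1)` and, when `α ≥ 2`, `0`; two distinct primes `p, q ∣ n` already give the four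
values `φ(n)`, `-φ(n)/(p-1)`, `-φ(n)/(q-1)` and `φ(n)/((p-1)(q-1))`.
-/

open scoped Classical

/-- The unitary Cayley graph `X_n` on `ℤ_n`: `i ~ j` iff `i - j` is a unit
(equivalently `gcd(i-j, n) = 1`). -/
def ucg (n : ℕ) : SimpleGraph (ZMod n) where
  Adj i j := i ≠ j ∧ IsUnit (i - j)
  symm := by
    refine ⟨?_⟩
    intro i j h
    exact ⟨h.1.symm, by simpa [neg_sub] using h.2.neg⟩
  loopless := ⟨fun i h => h.1 rfl⟩

open Finset ZMod Polynomial
open scoped Nat ArithmeticFunction.Moebius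

theorem Finset.sum_units_eq_sum_filter_isUnit {M R : Type*} [Monoid M] [Fintype M]
    [DecidableEq M] [AddCommMonoid R] (f : M → R) :
    ∑ u : Mˣ, f u = ∑ x with IsUnit x, f x :=
  sum_bij (fun u _ => (u : M)) (by simp) (fun _ _ _ _ h => Units.ext h)
    (fun x hx => ⟨(mem_filter.1 hx).2.unit, by simp, rfl⟩) (fun _ _ => rfl)

theorem MonoidHom.sum_comp_of_surjective {G H A : Type*} [Group G] [Fintype G] [Group H]
    [Fintype H] [AddCommMonoid A] (f : G →* H) (hf : Function.Surjective f) (g : H → A) :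
    ∑ x, g (f x) = (Fintype.card G / Fintype.card H) • ∑ y, g y := by
  set c := #{x | f x = 1}
  have hfiber : ∀ y, #{x | f x = y} = c := fun y =>
    card_fiber_eq_of_mem_range f (hf y) (hf 1)
  have hcard : Fintype.card G = c * Fintype.card H := by
    rw [← card_univ, card_eq_sum_card_fiberwise fun x _ => mem_coe.mpr (mem_univ (f x))]
    simp [hfiber, mul_comm]
  rw [Finset.sum_comp, image_univ_of_surjective hf, hcard, Nat.mul_div_cancel _ Fintype.card_pos,
    smul_sum]
  simp only [hfiber]

theorem IsPrimitiveRoot.sum_nthRootsFinset_one {n : ℕ} {ω : ℂ} (hω : IsPrimitiveRoot ω n)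
    (hn : 1 < n) : ∑ ζ ∈ nthRootsFinset n (1 : ℂ), ζ = 0 := by
  have hinj : Set.InjOn (ω ^ ·) (range n) := fun i hi j hj h =>
    hω.pow_inj (mem_range.mp hi) (mem_range.mp hj) h
  have himage : (range n).image (ω ^ ·) = nthRootsFinset n (1 : ℂ) := by
    refine eq_of_subset_of_card_le (fun ζ hζ => ?_) ?_
    · obtain ⟨i, -, rfl⟩ := mem_image.mp hζ
      rw [Polynomial.mem_nthRootsFinset (by omega), ← pow_mul, mul_comm, pow_mul,
        hω.pow_eq_one, one_pow]
    · rw [hω.card_nthRootsFinset, card_image_of_injOn hinj, card_range]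
  rw [← himage, sum_image hinj, hω.geom_sum_eq_zero hn]

theorem sum_primitiveRoots_eq_moebius {n : ℕ} (hn : 0 < n) :
    ∑ ζ ∈ primitiveRoots n ℂ, ζ = μ n := by
  have hsum : ∀ m > 0, ∑ d ∈ m.divisors, ∑ ζ ∈ primitiveRoots d ℂ, ζ =
      if m = 1 then 1 else 0 := by
    intro m hm
    split_ifs with h1
    · simp [h1]
    · rw [← sum_biUnion fun i _ j _ hij => IsPrimitiveRoot.disjoint hij,
        ← IsPrimitiveRoot.nthRoots_one_eq_biUnion_primitiveRoots]
      exact (Complex.isPrimitiveRoot_exp m hm.ne').sum_nthRootsFinset_one (by omega)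
  rw [← ArithmeticFunction.sum_eq_iff_sum_mul_moebius_eq.mp hsum n hn,
    Nat.sum_divisorsAntidiagonal fun x y => (μ x : ℂ) * if y = 1 then 1 else 0,
    sum_eq_single n]
  · simp [Nat.div_self hn]
  · intro d hd hdn
    rw [if_neg fun h => hdn (Nat.eq_of_dvd_of_div_eq_one (Nat.dvd_of_mem_divisors hd) h),
      mul_zero]
  · simp [hn.ne']

namespace ZMod

variable {n : ℕ} [NeZero n]

theorem isPrimitiveRoot_stdAddChar_one : IsPrimitiveRoot (stdAddChar (1 : ZMod n)) n := by
  have h := stdAddChar_coe (N := n) 1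
  rw [Int.cast_one, Int.cast_one, mul_one] at h
  exact h ▸ Complex.isPrimitiveRoot_exp n (NeZero.ne n)

theorem stdAddChar_natCast (k : ℕ) :
    stdAddChar (k : ZMod n) = stdAddChar (1 : ZMod n) ^ k := by
  rw [← AddChar.map_nsmul_eq_pow, nsmul_one]

theorem stdAddChar_natCast_div_mul {d : ℕ} [NeZero d] (hd : d ∣ n) (x : ZMod n) :
    stdAddChar (((n / d : ℕ) : ZMod n) * x) = stdAddChar (castHom hd (ZMod d) x) := by
  rw [← intCast_zmod_cast x, map_intCast, ← Int.cast_natCast, ← Int.cast_mul,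
    stdAddChar_coe, stdAddChar_coe]
  have hn0 : (n : ℂ) ≠ 0 := Nat.cast_ne_zero.mpr (NeZero.ne n)
  have hd0 : (d : ℂ) ≠ 0 := Nat.cast_ne_zero.mpr (NeZero.ne d)
  rw [Int.cast_mul, Int.cast_natCast, Nat.cast_div hd hd0]
  field_simp

end ZMod

theorem Matrix.spectrum_circulant {N : ℕ} [NeZero N] (v : ZMod N → ℂ) :
    spectrum ℂ (circulant v) = Set.range (𝓕 v) := by
  set W := LinearMap.toMatrix' (𝓕 : (ZMod N → ℂ) ≃ₗ[ℂ] (ZMod N → ℂ)).toLinearMap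
  have hW : ∀ k j, W k j = stdAddChar (-(j * k)) := by
    intro k j
    simp [W, LinearMap.toMatrix'_apply, dft_apply, Pi.single_apply]
  have hconj : W * circulant v = diagonal (𝓕 v) * W := by
    ext k j
    rw [mul_apply, diagonal_mul, hW, dft_apply, sum_mul]
    refine Fintype.sum_equiv (Equiv.subRight j) _ _ fun x => ?_
    simp only [hW, circulant_apply, Equiv.subRight_apply, smul_eq_mul]
    rw [mul_right_comm, ← AddChar.map_add_eq_mul]
    ring_nf
  obtain ⟨u, hu⟩ : IsUnit W :=
    ((Module.End.isUnit_iff _).mpr (𝓕 : (ZMod N → ℂ) ≃ₗ[ℂ] _).bijective).map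
      LinearMap.toMatrixAlgEquiv'
  have : circulant v = u⁻¹ * diagonal (𝓕 v) * u := by
    rw [hu, mul_assoc, ← hconj, ← mul_assoc, ← hu, Units.inv_mul, one_mul]
  rw [this, spectrum.units_conjugate', spectrum_diagonal]

noncomputable def ramanujanSum (n : ℕ) [NeZero n] (a : ZMod n) : ℂ :=
  ∑ u : (ZMod n)ˣ, stdAddChar (a * (u : ZMod n))

-- The conjunct `s ≠ 0` only matters for `n = 1`, where `0` is a unit.
theorem adjMat_ucg (n : ℕ) [NeZero n] :
    adjMat (ucg n) = Matrix.circulant fun s => if s ≠ 0 ∧ IsUnit s then 1 else 0 := by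
  ext i j
  exact if_congr (and_congr_left' sub_ne_zero.symm) rfl rfl

theorem spectrum_adjMat_ucg {n : ℕ} [NeZero n] (hn : 1 < n) :
    spectrum ℂ (adjMat (ucg n)) = Set.range (ramanujanSum n) := by
  have : Fact (1 < n) := ⟨hn⟩
  have hdft : 𝓕 (fun s : ZMod n => if s ≠ 0 ∧ IsUnit s then (1 : ℂ) else 0) =
      fun k => ramanujanSum n (-k) := by
    ext k
    rw [ramanujanSum, sum_units_eq_sum_filter_isUnit fun x => stdAddChar (-k * x)]
    simp only [dft_apply, smul_eq_mul, mul_ite, mul_one, mul_zero, ← sum_filter]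
    refine sum_congr (filter_congr fun x _ => ⟨And.right, fun h => ⟨h.ne_zero, h⟩⟩)
      fun x _ => by ring_nf
  rw [adjMat_ucg, Matrix.spectrum_circulant, hdft]
  exact neg_surjective.range_comp (ramanujanSum n)

section RamanujanSum

variable {n : ℕ} [NeZero n]

theorem ramanujanSum_zero : ramanujanSum n 0 = φ n := by
  simp [ramanujanSum, card_units_eq_totient]

theorem ramanujanSum_of_isUnit {a : ZMod n} (ha : IsUnit a) :
    ramanujanSum n a = ramanujanSum n 1 := by
  obtain ⟨u, rfl⟩ := ha
  simp only [ramanujanSum, one_mul]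
  exact Fintype.sum_equiv (Equiv.mulLeft u) _ _ fun v => by simp

theorem ramanujanSum_one_eq_sum_primitiveRoots :
    ramanujanSum n 1 = ∑ ζ ∈ primitiveRoots n ℂ, ζ := by
  have hω := isPrimitiveRoot_stdAddChar_one (n := n)
  have hval : ∀ u : (ZMod n)ˣ,
      stdAddChar (u : ZMod n) = stdAddChar (1 : ZMod n) ^ (u : ZMod n).val := by
    intro u
    rw [← stdAddChar_natCast, natCast_zmod_val]
  simp only [ramanujanSum, one_mul]
  refine sum_nbij (fun u => stdAddChar (u : ZMod n)) (fun u _ => ?_) (fun u _ v _ h => ?_)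
    (fun ζ hζ => ?_) (fun _ _ => rfl)
  · rw [mem_primitiveRoots (NeZero.pos n), hval]
    exact hω.pow_of_coprime _ (val_coe_unit_coprime u)
  · exact Units.ext (injective_stdAddChar h)
  · obtain ⟨i, -, hi, rfl⟩ := hω.isPrimitiveRoot_iff.mp
      ((mem_primitiveRoots (NeZero.pos n)).mp (mem_coe.mp hζ))
    exact ⟨unitOfCoprime i hi, mem_coe.mpr (mem_univ _), stdAddChar_natCast i⟩

theorem ramanujanSum_one : ramanujanSum n 1 = μ n := by
  rw [ramanujanSum_one_eq_sum_primitiveRoots, sum_primitiveRoots_eq_moebius (NeZero.pos n)]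

theorem ramanujanSum_natCast_div_mul {d : ℕ} [NeZero d] (hd : d ∣ n) (x : ZMod n) :
    ramanujanSum n (((n / d : ℕ) : ZMod n) * x) =
      ((φ n / φ d : ℕ) : ℂ) * ramanujanSum d (castHom hd (ZMod d) x) := by
  have hterm : ∀ u : (ZMod n)ˣ, stdAddChar (((n / d : ℕ) : ZMod n) * x * (u : ZMod n)) =
      stdAddChar (castHom hd (ZMod d) x * (unitsMap hd u : ZMod d)) := by
    intro u
    rw [mul_assoc, stdAddChar_natCast_div_mul hd, map_mul]
    rfl
  simp only [ramanujanSum, hterm]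
  rw [MonoidHom.sum_comp_of_surjective _ (unitsMap_surjective hd)
      fun v : (ZMod d)ˣ => stdAddChar (castHom hd (ZMod d) x * (v : ZMod d)),
    card_units_eq_totient, card_units_eq_totient, nsmul_eq_mul]

theorem ramanujanSum_natCast_div {d : ℕ} (hd : d ∣ n) :
    ramanujanSum n (n / d : ℕ) = ((φ n / φ d : ℕ) : ℂ) * μ d := by
  have : NeZero d := ⟨ne_zero_of_dvd_ne_zero (NeZero.ne n) hd⟩
  have h := ramanujanSum_natCast_div_mul hd 1
  rwa [mul_one, map_one, ramanujanSum_one] at h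

theorem exists_ramanujanSum_eq (a : ZMod n) :
    ∃ d, d ∣ n ∧ ramanujanSum n a = ((φ n / φ d : ℕ) : ℂ) * μ d := by
  set g := a.val.gcd n
  have hg : 0 < g := Nat.gcd_pos_of_pos_right _ (NeZero.pos n)
  have hgn : g ∣ n := Nat.gcd_dvd_right _ _
  have hd : n / g ∣ n := Nat.div_dvd_of_dvd hgn
  have : NeZero (n / g) := ⟨ne_zero_of_dvd_ne_zero (NeZero.ne n) hd⟩
  have ha : a = ((n / (n / g) : ℕ) : ZMod n) * ((a.val / g : ℕ) : ZMod n) := by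
    rw [Nat.div_div_self hgn (NeZero.ne n), ← Nat.cast_mul,
      Nat.mul_div_cancel' (Nat.gcd_dvd_left _ _), natCast_zmod_val]
  have hunit : IsUnit (castHom hd (ZMod (n / g)) ((a.val / g : ℕ) : ZMod n)) := by
    rw [map_natCast]
    exact (isUnit_iff_coprime _ _).mpr (Nat.coprime_div_gcd_div_gcd hg)
  refine ⟨n / g, hd, ?_⟩
  rw [ha, ramanujanSum_natCast_div_mul hd, ramanujanSum_of_isUnit hunit, ramanujanSum_one]

theorem range_ramanujanSum :
    Set.range (ramanujanSum n) = (fun d => ((φ n / φ d : ℕ) : ℂ) * μ d) '' {d | d ∣ n} := by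
  ext z
  constructor
  · rintro ⟨a, rfl⟩
    obtain ⟨d, hd, h⟩ := exists_ramanujanSum_eq a
    exact ⟨d, hd, h.symm⟩
  · rintro ⟨d, hd, rfl⟩
    exact ⟨_, ramanujanSum_natCast_div hd⟩

end RamanujanSum

section Counting

variable {n : ℕ} [NeZero n]

theorem ncard_range_ramanujanSum_of_prime (hn : n.Prime) :
    (Set.range (ramanujanSum n)).ncard = 2 := by
  have : Fact n.Prime := ⟨hn⟩
  have hrange : Set.range (ramanujanSum n) = {(φ n : ℂ), -1} := by
    apply Set.Subset.antisymm
    · rintro _ ⟨a, rfl⟩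
      rcases eq_or_ne a 0 with rfl | ha
      · exact Or.inl ramanujanSum_zero
      · right
        rw [ramanujanSum_of_isUnit (isUnit_iff_ne_zero.mpr ha), ramanujanSum_one,
          ArithmeticFunction.moebius_apply_prime hn, Int.cast_neg, Int.cast_one]
        rfl
    · rintro _ (rfl | rfl)
      · exact ⟨0, ramanujanSum_zero⟩
      · exact ⟨1, by rw [ramanujanSum_one, ArithmeticFunction.moebius_apply_prime hn]; simp⟩
  rw [hrange, Set.ncard_pair]
  norm_cast

theorem ncard_range_ramanujanSum_of_eq_primePow {p α : ℕ} (hp : p.Prime) (hα : 2 ≤ α)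
    (hn : n = p ^ α) : (Set.range (ramanujanSum n)).ncard = 3 := by
  have hφ : 0 < φ n := Nat.totient_pos.mpr (NeZero.pos n)
  have hpn : p ∣ n := hn ▸ dvd_pow_self p (by omega)
  have hK : 0 < φ n / φ p := Nat.div_pos (Nat.le_of_dvd hφ (Nat.totient_dvd_of_dvd hpn))
    (Nat.totient_pos.mpr hp.pos)
  have hrange : Set.range (ramanujanSum n) = {(φ n : ℂ), -((φ n / φ p : ℕ) : ℂ), 0} := by
    rw [range_ramanujanSum]
    apply Set.Subset.antisymm
    · rintro _ ⟨d, hd, rfl⟩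
      obtain ⟨i, -, rfl⟩ := (Nat.dvd_prime_pow hp).mp (hn ▸ hd)
      rcases i with _ | _ | i
      · simp
      · simp [ArithmeticFunction.moebius_apply_prime hp]
      · simp [ArithmeticFunction.moebius_apply_prime_pow hp]
    · rintro _ (rfl | rfl | rfl)
      · exact ⟨1, one_dvd n, by simp⟩
      · exact ⟨p, hpn, by simp [ArithmeticFunction.moebius_apply_prime hp]⟩
      · exact ⟨p ^ 2, hn ▸ pow_dvd_pow p hα,
          by simp [ArithmeticFunction.moebius_apply_prime_pow hp]⟩
  rw [hrange, Set.ncard_eq_three]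
  refine ⟨_, _, _, ?_, ?_, ?_, rfl⟩ <;> norm_cast <;> omega

theorem four_le_ncard_range_ramanujanSum {p q : ℕ} (hp : p.Prime) (hq : q.Prime) (hpq : p ≠ q)
    (hpn : p ∣ n) (hqn : q ∣ n) : 4 ≤ (Set.range (ramanujanSum n)).ncard := by
  have hco : p.Coprime q := (Nat.coprime_primes hp hq).mpr hpq
  obtain ⟨K, hK⟩ : φ p * φ q ∣ φ n :=
    Nat.totient_mul hco ▸ Nat.totient_dvd_of_dvd (hco.mul_dvd_of_dvd_of_dvd hpn hqn)
  have hφn : 0 < φ n := Nat.totient_pos.mpr (NeZero.pos n)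
  have hK0 : 0 < K := Nat.pos_of_mul_pos_left (hK ▸ hφn)
  have hP : φ p = p - 1 := Nat.totient_prime hp
  have hQ : φ q = q - 1 := Nat.totient_prime hq
  have hp2 := hp.two_le
  have hq2 := hq.two_le
  have hdiv_p : φ n / φ p = φ q * K := by
    rw [hK, mul_assoc, Nat.mul_div_cancel_left _ (Nat.totient_pos.mpr hp.pos)]
  have hdiv_q : φ n / φ q = φ p * K := by
    rw [hK, mul_comm (φ p), mul_assoc, Nat.mul_div_cancel_left _ (Nat.totient_pos.mpr hq.pos)]
  have hdiv_pq : φ n / φ (p * q) = K := by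
    rw [Nat.totient_mul hco, hK, Nat.mul_div_cancel_left _ (by positivity)]
  have hμ_pq : μ (p * q) = 1 := by
    rw [ArithmeticFunction.isMultiplicative_moebius.map_mul_of_coprime hco,
      ArithmeticFunction.moebius_apply_prime hp, ArithmeticFunction.moebius_apply_prime hq]
    rfl
  have hsub : ({(φ n : ℂ), -((φ q * K : ℕ) : ℂ), -((φ p * K : ℕ) : ℂ), (K : ℂ)} : Set ℂ) ⊆
      Set.range (ramanujanSum n) := by
    rintro _ (rfl | rfl | rfl | rfl)
    · exact ⟨0, ramanujanSum_zero⟩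
    · refine ⟨(n / p : ℕ), ?_⟩
      rw [ramanujanSum_natCast_div hpn, hdiv_p, ArithmeticFunction.moebius_apply_prime hp]
      push_cast
      ring
    · refine ⟨(n / q : ℕ), ?_⟩
      rw [ramanujanSum_natCast_div hqn, hdiv_q, ArithmeticFunction.moebius_apply_prime hq]
      push_cast
      ring
    · refine ⟨(n / (p * q) : ℕ), ?_⟩
      rw [ramanujanSum_natCast_div (hco.mul_dvd_of_dvd_of_dvd hpn hqn), hdiv_pq, hμ_pq]
      push_cast
      ring
  have hφpq : φ q * K ≠ φ p * K := fun h => by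
    have := Nat.eq_of_mul_eq_mul_right hK0 h
    omega
  have hφnK : φ n ≠ K := by
    rw [hK]
    have : 1 < φ p * φ q := Nat.one_lt_mul_iff.mpr (by omega)
    nlinarith
  refine le_of_eq_of_le ?_ (Set.ncard_le_ncard hsub (Set.finite_range _))
  rw [Set.ncard_insert_of_notMem, Set.ncard_insert_of_notMem, Set.ncard_pair]
  all_goals simp only [Set.mem_insert_iff, Set.mem_singleton_iff, not_or, neg_inj, ne_eq]
  all_goals norm_cast
  all_goals have := hK0.ne'; have := hφn.ne'; tauto

theorem ncard_range_ramanujanSum_eq_three_iff (hn : 1 < n) :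
    (Set.range (ramanujanSum n)).ncard = 3 ↔ ∃ p α : ℕ, p.Prime ∧ 2 ≤ α ∧ n = p ^ α := by
  refine ⟨fun h3 => ?_, fun ⟨p, α, hp, hα, hpow⟩ =>
    ncard_range_ramanujanSum_of_eq_primePow hp hα hpow⟩
  obtain ⟨p, hp, hpn⟩ := Nat.exists_prime_and_dvd hn.ne'
  have hunique : ∀ {q : ℕ}, q.Prime → q ∣ n → q = p := fun {q} hq hqn => by
    by_contra hqp
    have := four_le_ncard_range_ramanujanSum hq hp hqp hqn hpn
    omega
  have hpow := Nat.eq_prime_pow_of_unique_prime_dvd (NeZero.ne n) hunique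
  refine ⟨p, _, hp, ?_, hpow⟩
  by_contra hα
  interval_cases h : n.primeFactorsList.length
  · rw [pow_zero] at hpow
    omega
  · rw [pow_one] at hpow
    have := ncard_range_ramanujanSum_of_prime (hpow ▸ hp)
    omega

end Counting

/-- the unitary Cayley graph `X_n` is strongly regular (exactly three
distinct adjacency eigenvalues) iff `n` is a composite prime power `p^α`, `α ≥ 2`. -/
theorem stmt_6 (n : ℕ) [NeZero n] :
    (spectrum ℂ (adjMat (ucg n))).ncard = 3 ↔
      ∃ p α : ℕ, p.Prime ∧ 2 ≤ α ∧ n = p ^ α := by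
  rcases (Nat.one_le_iff_ne_zero.mpr (NeZero.ne n)).eq_or_lt with rfl | hn
  · rw [adjMat_ucg, Matrix.spectrum_circulant, Set.range_unique, Set.ncard_singleton]
    simp only [OfNat.one_ne_ofNat, false_iff, not_exists, not_and]
    intro p α hp hα h
    rw [eq_comm, Nat.pow_eq_one] at h
    have := hp.two_le
    omega
  · rw [spectrum_adjMat_ucg hn, ncard_range_ramanujanSum_eq_three_iff hn]
end

section
/- Let n, m be coprime positive integers, D_1 a set of divisors of n (excluding n) and D_2 a set of divisors of m (excluding m). Then the tensor product ICG_n(D_1) ⊗ ICG_m(D_2) is isomorphic to ICG_{nm}({d₁d₂ : d₁ ∈ D_1, d₂ ∈ D_2}), via the map sending (a,b) to the residue of am + bn modulo nm. -/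
/-- The integral circulant graph `ICG_n(D)`: vertices `ℤ_n`, `a ~ b` iff `a ≠ b` and
`gcd(a - b, n) ∈ D`. -/
def ICG (n : ℕ) (D : Set ℕ) : SimpleGraph (ZMod n) :=
  SimpleGraph.fromRel (fun a b => Nat.gcd (a - b).val n ∈ D)

/-- The tensor (categorical) product of graphs. -/
def tensorProd {V W : Type*} (G : SimpleGraph V) (H : SimpleGraph W) :
    SimpleGraph (V × W) where
  Adj u v := G.Adj u.1 v.1 ∧ H.Adj u.2 v.2
  symm := ⟨fun _ _ h => ⟨h.1.symm, h.2.symm⟩⟩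
  loopless := ⟨fun u h => G.irrefl h.1⟩

/-! The map `φ(a, b) = a m + b n` respects subtraction, and since `n` and `m` are coprime,
`gcd(φ(a, b), n m) = gcd(a, n) · gcd(b, m)`. Applied to `u - v` this gives injectivity
(the gcd is `n m` only when `u = v`) and the adjacency criterion: a product `g₁ g₂` with
`g₁ ∣ n`, `g₂ ∣ m` determines its factors as `g₁ = gcd(g₁ g₂, n)` and `g₂ = gcd(g₁ g₂, m)`. -/

namespace ZMod

lemma gcd_val_neg {n : ℕ} [NeZero n] (x : ZMod n) :
    Nat.gcd (-x).val n = Nat.gcd x.val n := by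
  rcases eq_or_ne x 0 with rfl | hx
  · simp
  · have : NeZero x := ⟨hx⟩
    have hle : x.val ≤ n := (val_lt x).le
    rw [val_neg_of_ne_zero, ← Nat.gcd_sub_self_right (Nat.sub_le n x.val),
      Nat.sub_sub_self hle, Nat.gcd_sub_self_left hle, Nat.gcd_comm]

lemma gcd_val_eq_self_iff {n : ℕ} [NeZero n] (x : ZMod n) :
    Nat.gcd x.val n = n ↔ x = 0 := by
  rw [Nat.gcd_eq_right_iff_dvd, ← natCast_eq_zero_iff, natCast_zmod_val]

lemma natCast_val_sub_mul {n N : ℕ} [NeZero n] (k : ℕ) (hN : N ∣ n * k) (x y : ZMod n) :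
    (((x - y).val * k : ℕ) : ZMod N) =
      ((x.val * k : ℕ) : ZMod N) - ((y.val * k : ℕ) : ZMod N) := by
  rw [eq_sub_iff_add_eq, ← Nat.cast_add, ← add_mul, natCast_eq_natCast_iff]
  have hx : x.val = ((x - y).val + y.val) % n := by rw [← val_add, sub_add_cancel]
  rw [hx, ← Nat.mul_mod_mul_right]
  exact ((Nat.mod_modEq _ _).of_dvd hN).symm

end ZMod

lemma Nat.Coprime.gcd_mul_of_dvd_of_dvd {n m a b : ℕ} (hco : n.Coprime m) (ha : a ∣ n)
    (hb : b ∣ m) : Nat.gcd (a * b) n = a := by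
  rw [(hco.coprime_dvd_right hb).symm.gcd_mul_right_cancel a, Nat.gcd_eq_left ha]

lemma Nat.Coprime.mul_mem_products_iff {n m a b : ℕ} {D₁ D₂ : Set ℕ} (hco : n.Coprime m)
    (hD₁ : ∀ d ∈ D₁, d ∣ n) (hD₂ : ∀ d ∈ D₂, d ∣ m) (ha : a ∣ n) (hb : b ∣ m) :
    a * b ∈ {e | ∃ d₁ ∈ D₁, ∃ d₂ ∈ D₂, e = d₁ * d₂} ↔ a ∈ D₁ ∧ b ∈ D₂ := by
  refine ⟨?_, fun ⟨ha₁, hb₂⟩ => ⟨a, ha₁, b, hb₂, rfl⟩⟩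
  rintro ⟨d₁, hd₁, d₂, hd₂, hab⟩
  have hd₁a : d₁ = a := by
    rw [← hco.gcd_mul_of_dvd_of_dvd ha hb, hab,
      hco.gcd_mul_of_dvd_of_dvd (hD₁ d₁ hd₁) (hD₂ d₂ hd₂)]
  have hd₂b : d₂ = b := by
    rw [← hco.symm.gcd_mul_of_dvd_of_dvd hb ha, mul_comm, hab,
      mul_comm, hco.symm.gcd_mul_of_dvd_of_dvd (hD₂ d₂ hd₂) (hD₁ d₁ hd₁)]
  exact ⟨hd₁a ▸ hd₁, hd₂b ▸ hd₂⟩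

lemma mul_notMem_products {n m : ℕ} {D₁ D₂ : Set ℕ} (hn : 0 < n) (hm : 0 < m)
    (hD₁ : ∀ d ∈ D₁, d ∣ n ∧ d ≠ n) (hD₂ : ∀ d ∈ D₂, d ∣ m) :
    n * m ∉ {e | ∃ d₁ ∈ D₁, ∃ d₂ ∈ D₂, e = d₁ * d₂} := by
  rintro ⟨d₁, hd₁, d₂, hd₂, hnm⟩
  have hlt : d₁ < n := (Nat.le_of_dvd hn (hD₁ d₁ hd₁).1).lt_of_ne (hD₁ d₁ hd₁).2
  exact (Nat.mul_lt_mul_of_lt_of_le hlt (Nat.le_of_dvd hm (hD₂ d₂ hd₂)) hm).ne' hnm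

lemma ICG_adj_iff {n : ℕ} [NeZero n] {D : Set ℕ} (hD : n ∉ D) (a b : ZMod n) :
    (ICG n D).Adj a b ↔ Nat.gcd (a - b).val n ∈ D := by
  have hsymm : Nat.gcd (b - a).val n = Nat.gcd (a - b).val n := by
    rw [← neg_sub, ZMod.gcd_val_neg]
  simp only [ICG, SimpleGraph.fromRel_adj, hsymm, or_self, and_iff_right_iff_imp]
  rintro hD' rfl
  rw [sub_self, ZMod.val_zero, Nat.gcd_zero_left] at hD'
  exact hD hD'

def crtMap (n m : ℕ) (ab : ZMod n × ZMod m) : ZMod (n * m) :=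
  ((ab.1.val * m + ab.2.val * n : ℕ) : ZMod (n * m))

lemma crtMap_sub {n m : ℕ} [NeZero n] [NeZero m] (u v : ZMod n × ZMod m) :
    crtMap n m (u - v) = crtMap n m u - crtMap n m v := by
  simp only [crtMap, Prod.fst_sub, Prod.snd_sub, Nat.cast_add,
    ZMod.natCast_val_sub_mul m dvd_rfl, ZMod.natCast_val_sub_mul n (mul_comm n m).dvd]
  abel

lemma gcd_val_crtMap {n m : ℕ} (hco : n.Coprime m) (u : ZMod n × ZMod m) :
    Nat.gcd (crtMap n m u).val (n * m) = Nat.gcd u.1.val n * Nat.gcd u.2.val m := by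
  rw [crtMap, ZMod.val_natCast, ← Nat.gcd_rec, Nat.gcd_comm, hco.gcd_mul]
  congr 1
  · rw [add_comm, Nat.gcd_mul_right_add_left, hco.symm.gcd_mul_right_cancel]
  · rw [Nat.gcd_mul_right_add_left, hco.gcd_mul_right_cancel]

lemma crtMap_eq_zero_iff {n m : ℕ} [NeZero n] [NeZero m] (hco : n.Coprime m)
    (u : ZMod n × ZMod m) : crtMap n m u = 0 ↔ u = 0 := by
  have : NeZero (n * m) := ⟨mul_ne_zero (NeZero.ne n) (NeZero.ne m)⟩
  rw [← ZMod.gcd_val_eq_self_iff, gcd_val_crtMap hco,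
    mul_eq_mul_iff_eq_and_eq_of_pos (Nat.gcd_le_right _ (NeZero.pos n))
      (Nat.gcd_le_right _ (NeZero.pos m)) (Nat.gcd_pos_of_pos_right _ (NeZero.pos n))
      (NeZero.pos m),
    ZMod.gcd_val_eq_self_iff, ZMod.gcd_val_eq_self_iff, Prod.ext_iff]
  rfl

lemma crtMap_bijective {n m : ℕ} [NeZero n] [NeZero m] (hco : n.Coprime m) :
    Function.Bijective (crtMap n m) := by
  have hinj : Function.Injective (crtMap n m) := fun u v huv => by
    rw [← sub_eq_zero, ← crtMap_eq_zero_iff hco, crtMap_sub, huv, sub_self]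
  rw [Fintype.bijective_iff_injective_and_card]
  exact ⟨hinj, by simp [ZMod.card]⟩

/-- for coprime `n, m` and divisor sets `D₁ ⊆ D_n`, `D₂ ⊆ D_m`, the map
`(a,b) ↦ am + bn (mod nm)` is a graph isomorphism
`ICG_n(D₁) ⊗ ICG_m(D₂) ≅ ICG_{nm}({d₁d₂ : d₁ ∈ D₁, d₂ ∈ D₂})`. -/
theorem stmt_16 (n m : ℕ) (hn : 0 < n) (hm : 0 < m) (hco : n.Coprime m)
    (D₁ D₂ : Set ℕ) (hD₁ : ∀ d ∈ D₁, d ∣ n ∧ d ≠ n) (hD₂ : ∀ d ∈ D₂, d ∣ m ∧ d ≠ m) :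
    Function.Bijective
        (fun ab : ZMod n × ZMod m => ((ab.1.val * m + ab.2.val * n : ℕ) : ZMod (n * m)))
      ∧ ∀ u v : ZMod n × ZMod m,
          (tensorProd (ICG n D₁) (ICG m D₂)).Adj u v ↔
            (ICG (n * m) {e | ∃ d₁ ∈ D₁, ∃ d₂ ∈ D₂, e = d₁ * d₂}).Adj
              ((u.1.val * m + u.2.val * n : ℕ) : ZMod (n * m))
              ((v.1.val * m + v.2.val * n : ℕ) : ZMod (n * m)) := by
  have : NeZero n := ⟨hn.ne'⟩
  have : NeZero m := ⟨hm.ne'⟩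
  have : NeZero (n * m) := ⟨(Nat.mul_pos hn hm).ne'⟩
  refine ⟨crtMap_bijective hco, fun u v => ?_⟩
  change (ICG n D₁).Adj u.1 v.1 ∧ (ICG m D₂).Adj u.2 v.2 ↔
    (ICG (n * m) _).Adj (crtMap n m u) (crtMap n m v)
  rw [ICG_adj_iff fun h => (hD₁ n h).2 rfl, ICG_adj_iff fun h => (hD₂ m h).2 rfl,
    ICG_adj_iff (mul_notMem_products hn hm hD₁ fun d hd => (hD₂ d hd).1), ← crtMap_sub,
    gcd_val_crtMap hco,
    hco.mul_mem_products_iff (fun d hd => (hD₁ d hd).1) (fun d hd => (hD₂ d hd).1)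
      (Nat.gcd_dvd_right _ _) (Nat.gcd_dvd_right _ _)]
  rfl
end
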